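/- With W and the bilinear form as above, define e_n|m⟩ = -(q/[2])|m - 2e_n⟩ and f_n|m⟩ = q^{-1}([m_n+1][m_n+2]/[2])|m + 2e_n⟩ and k_n|m⟩ = q^{-2m_n-1}|m⟩. Then (e_n v, v') = (v, -q^{-2}k_n^{-1}f_n v') for all basis vectors v, v' of W. -/

import Mathlib

/-!
Both sides are diagonal pairings, so they vanish unless `m = m' + 2eₗ`. In that case, with
`a = m'ₗ`, the square norms of `|m⟩` and `|m'⟩` differ by the factor `q^{-(2a+1)} / ([a+1][a+2])`,
because `(a+2)(a+1)/2 - a(a-1)/2 = 2a+1` and `[a+2]! = [a]! [a+1][a+2]`. Against the coefficient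
`-q⁻² · q^{2a+5} · q⁻¹ [a+1][a+2]/[2]` of `-q⁻² kₗ⁻¹ fₗ` this factor leaves exactly `-q/[2]`.
The identity holds at every coordinate `l`, the node `n` being `l = n - 1`.
-/

noncomputable abbrev Kq : Type := RatFunc ℚ
noncomputable abbrev q : Kq := RatFunc.X

/-- The balanced q-integer `[m] = (q^m - q^{-m})/(q - q^{-1})`. -/
noncomputable def qInt (m : ℕ) : Kq :=
  (q ^ m - q⁻¹ ^ m) / (q - q⁻¹)

/-- The q-factorial `[m]!`. -/
noncomputable def qFac (m : ℕ) : Kq :=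
  ∏ k ∈ Finset.range m, qInt (k + 1)

/-- The ℚ(q)-vector space `W` with basis `|m⟩`, `m ∈ ℤ_{≥0}^n`. -/
noncomputable abbrev W (n : ℕ) : Type := (Fin n → ℕ) →₀ Kq

/-- The basis vector `|m⟩`. -/
noncomputable def ket {n : ℕ} (m : Fin n → ℕ) : W n := Finsupp.single m 1

/-- Extension of a map defined on basis vectors to an operator on `W`. -/
noncomputable def opOf {n : ℕ} (g : (Fin n → ℕ) → W n) : W n → W n :=
  fun v => v.sum fun m c => c • g m

/-- The symmetric bilinear form
`(|m⟩,|m'⟩) = δ_{m,m'} q^{-(1/2)Σ_i m_i(m_i-1)} / ∏_i [m_i]!`. -/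
noncomputable def bform {n : ℕ} (v v' : W n) : Kq :=
  v.sum fun m c =>
    c * v' m * (q ^ (-(((∑ i, m i * (m i - 1)) / 2 : ℕ) : ℤ)) * (∏ i, qFac (m i))⁻¹)

/-- `e_n |m⟩ = -(q/[2]) |m - 2e_n⟩` (zero if `m_n < 2`). -/
noncomputable def eN {n : ℕ} (ln : Fin n) : W n → W n :=
  opOf fun m =>
    if m ln < 2 then 0 else
      (-(q / qInt 2)) • ket (Function.update m ln (m ln - 2))

/-- `f_n |m⟩ = q^{-1}([m_n+1][m_n+2]/[2]) |m + 2e_n⟩`. -/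
noncomputable def fN {n : ℕ} (ln : Fin n) : W n → W n :=
  opOf fun m =>
    (q⁻¹ * (qInt (m ln + 1) * qInt (m ln + 2) / qInt 2)) •
      ket (Function.update m ln (m ln + 2))

/-- `k_n⁻¹ |m⟩ = q^{2m_n+1} |m⟩` (since `k_n |m⟩ = q^{-2m_n-1}|m⟩`). -/
noncomputable def kInvN {n : ℕ} (ln : Fin n) : W n → W n :=
  opOf fun m => (q ^ (2 * m ln + 1)) • ket m

open Function

lemma q_ne_zero : q ≠ 0 := RatFunc.X_ne_zero

lemma q_pow_ne_one {k : ℕ} (hk : k ≠ 0) : q ^ k ≠ 1 := by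
  intro h
  have hdeg : RatFunc.intDegree (algebraMap (Polynomial ℚ) Kq (Polynomial.X ^ k)) =
      RatFunc.intDegree (1 : Kq) := by
    rw [map_pow]; exact congrArg RatFunc.intDegree h
  rw [RatFunc.intDegree_polynomial, Polynomial.natDegree_X_pow, RatFunc.intDegree_one] at hdeg
  exact hk (by exact_mod_cast hdeg)

lemma qInt_ne_zero {k : ℕ} (hk : k ≠ 0) : qInt k ≠ 0 := by
  have sub_inv_ne_zero : ∀ {j : ℕ}, j ≠ 0 → q ^ j - q⁻¹ ^ j ≠ 0 := fun {j} hj h => by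
    have hsq : q ^ (j + j) = 1 := calc
      q ^ (j + j) = q ^ j * q⁻¹ ^ j := by rw [pow_add, ← sub_eq_zero.mp h]
      _ = 1 := by rw [inv_pow, mul_inv_cancel₀ (pow_ne_zero j q_ne_zero)]
    exact q_pow_ne_one (by omega) hsq
  exact div_ne_zero (sub_inv_ne_zero hk) (by simpa using sub_inv_ne_zero one_ne_zero)

lemma qFac_ne_zero (k : ℕ) : qFac k ≠ 0 :=
  Finset.prod_ne_zero_iff.mpr fun _ _ => qInt_ne_zero (Nat.succ_ne_zero _)

lemma qFac_add_two (k : ℕ) : qFac (k + 2) = qFac k * (qInt (k + 1) * qInt (k + 2)) := by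
  simp only [qFac, Finset.prod_range_succ, mul_assoc]

section Update

variable {ι : Type*} [Fintype ι] [DecidableEq ι]

@[to_additive]
lemma prod_comp_update_mul {M : Type*} [CommMonoid M] (g : ℕ → M) (m : ι → ℕ) (l : ι) (v : ℕ) :
    (∏ i, g (update m l v i)) * g (m l) = (∏ i, g (m i)) * g v := by
  have hcompl : ∏ i ∈ {l}ᶜ, g (update m l v i) = ∏ i ∈ {l}ᶜ, g (m i) :=
    Finset.prod_congr rfl fun i hi =>
      congrArg g (update_of_ne (Finset.mem_compl.mp hi ∘ Finset.mem_singleton.mpr) v m)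
  rw [Fintype.prod_eq_mul_prod_compl l, Fintype.prod_eq_mul_prod_compl l (fun i => g (m i)),
    update_self, hcompl]
  ac_rfl

lemma sum_mul_pred_update_add_two (m : ι → ℕ) (l : ι) :
    ∑ i, update m l (m l + 2) i * (update m l (m l + 2) i - 1) =
      ∑ i, m i * (m i - 1) + 2 * (2 * m l + 1) := by
  have h := sum_comp_update_add (fun k => k * (k - 1)) m l (m l + 2)
  have hsq : (m l + 2) * (m l + 2 - 1) = m l * (m l - 1) + 2 * (2 * m l + 1) := by
    obtain _ | a := m l
    · rfl
    · rw [show a + 1 + 2 - 1 = a + 2 from rfl, show a + 1 - 1 = a from rfl]; ring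
  omega

end Update

/-- The square norm `(|m⟩, |m⟩)` of a basis vector. -/
noncomputable def ketNorm {n : ℕ} (m : Fin n → ℕ) : Kq :=
  q ^ (-(((∑ i, m i * (m i - 1)) / 2 : ℕ) : ℤ)) * (∏ i, qFac (m i))⁻¹

lemma ketNorm_update_add_two {n : ℕ} (m : Fin n → ℕ) (l : Fin n) :
    ketNorm (update m l (m l + 2)) =
      ketNorm m * (q ^ (2 * m l + 1) * (qInt (m l + 1) * qInt (m l + 2)))⁻¹ := by
  have hprod := prod_comp_update_mul qFac m l (m l + 2)
  rw [qFac_add_two, ← mul_assoc, mul_right_comm _ (qFac (m l)),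
    mul_left_inj' (qFac_ne_zero _)] at hprod
  rw [ketNorm, ketNorm, sum_mul_pred_update_add_two, Nat.add_mul_div_left _ _ two_pos, hprod,
    Nat.cast_add, neg_add, zpow_add₀ q_ne_zero, zpow_neg _ ((2 * m l + 1 : ℕ) : ℤ), zpow_natCast]
  ring

lemma bform_single {n : ℕ} (a : Fin n → ℕ) (c : Kq) (v' : W n) :
    bform (Finsupp.single a c) v' = c * v' a * ketNorm a :=
  Finsupp.sum_single_index (by rw [zero_mul, zero_mul])

lemma bform_ket {n : ℕ} (a : Fin n → ℕ) (v' : W n) : bform (ket a) v' = v' a * ketNorm a := by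
  rw [ket, bform_single, one_mul]

lemma bform_zero_left {n : ℕ} (v' : W n) : bform 0 v' = 0 :=
  Finsupp.sum_zero_index

lemma opOf_single {n : ℕ} (g : (Fin n → ℕ) → W n) (m : Fin n → ℕ) (c : Kq) :
    opOf g (Finsupp.single m c) = c • g m :=
  Finsupp.sum_single_index (zero_smul _ _)

lemma opOf_ket {n : ℕ} (g : (Fin n → ℕ) → W n) (m : Fin n → ℕ) : opOf g (ket m) = g m := by
  rw [ket, opOf_single, one_smul]

lemma smul_ket {n : ℕ} (c : Kq) (m : Fin n → ℕ) : c • ket m = Finsupp.single m c := by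
  rw [ket, Finsupp.smul_single, smul_eq_mul, mul_one]

section Node

variable {n : ℕ} (l : Fin n)

lemma eN_ket (m : Fin n → ℕ) :
    eN l (ket m) =
      if m l < 2 then 0 else Finsupp.single (update m l (m l - 2)) (-(q / qInt 2)) := by
  rw [eN, opOf_ket, smul_ket]

lemma fN_ket (m : Fin n → ℕ) :
    fN l (ket m) = Finsupp.single (update m l (m l + 2))
      (q⁻¹ * (qInt (m l + 1) * qInt (m l + 2) / qInt 2)) := by
  rw [fN, opOf_ket, smul_ket]

lemma kInvN_single (m : Fin n → ℕ) (c : Kq) :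
    kInvN l (Finsupp.single m c) = Finsupp.single m (c * q ^ (2 * m l + 1)) := by
  rw [kInvN, opOf_single, smul_ket, Finsupp.smul_single, smul_eq_mul]

theorem bform_eN_ket_ket (m m' : Fin n → ℕ) :
    bform (eN l (ket m)) (ket m') =
      bform (ket m) ((-(q ^ (-2 : ℤ))) • kInvN l (fN l (ket m'))) := by
  rw [eN_ket, fN_ket, kInvN_single, Finsupp.smul_single, bform_ket, Finsupp.single_apply]
  by_cases hm : update m' l (m' l + 2) = m
  · subst hm
    rw [if_neg (by simp), if_pos rfl, update_self, Nat.add_sub_cancel, update_idem, update_eq_self,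
      bform_single, ket, Finsupp.single_eq_same, ketNorm_update_add_two]
    have := qInt_ne_zero (k := 2) two_ne_zero
    have := qInt_ne_zero (k := m' l + 1) (by omega)
    have := qInt_ne_zero (k := m' l + 2) (by omega)
    have := q_ne_zero
    rw [smul_eq_mul, zpow_neg, zpow_ofNat]
    field_simp
    ring
  · rw [if_neg hm, zero_mul]
    split_ifs with hlt
    · exact bform_zero_left _
    · have hne : m' ≠ update m l (m l - 2) := fun h => hm <| by
        rw [h, update_idem, update_self, Nat.sub_add_cancel (by omega), update_eq_self]
      rw [bform_single, ket, Finsupp.single_apply, if_neg hne, mul_zero, zero_mul]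

end Node

/-- polarization at the node `n` for `U_q(C_n^{(1)})`:
`(e_n v, v') = (v, -q^{-2} k_n^{-1} f_n v')` for all basis vectors `v, v'`. -/
theorem polarization_node_n (n : ℕ) (hn : 0 < n) (m m' : Fin n → ℕ) :
    bform (eN ⟨n - 1, by omega⟩ (ket m)) (ket m') =
      bform (ket m)
        ((-(q ^ (-2 : ℤ))) • kInvN ⟨n - 1, by omega⟩ (fN ⟨n - 1, by omega⟩ (ket m'))) :=
  bform_eN_ket_ket _ m m'
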